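/- Weak falsity does not imply strong falsity: let p be an atom distinct from ⊥ and ⊤, and let B be an epistemically adequate base that contains the proof rule concluding ⊥ from the single proof premise p, and in which no refutation rule has conclusion p. Then ⊩⁺_B p→⊥ but not ⊩⁻_B p. -/
import Mathlib


/-- Atomic propositions; the set `At` includes the units `⊥` and `⊤`. -/
inductive Atom : Type where
  | bot : Atom
  | top : Atom
  | prop : ℕ → Atom
deriving DecidableEq

/-- Formulas over `At`, built with `∧`, `∨`, `→` and co-implication `↤`. -/
inductive Formula : Type where
  | atom : Atom → Formula
  | conj : Formula → Formula → Formula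
  | disj : Formula → Formula → Formula
  | impl : Formula → Formula → Formula
  | coimpl : Formula → Formula → Formula
deriving DecidableEq

abbrev Formula.bot : Formula := .atom .bot
abbrev Formula.top : Formula := .atom .top

/-- A formula is atomic iff it is a member of `At` (including `⊥` and `⊤`). -/
def Formula.isAtomic : Formula → Prop
  | .atom _ => True
  | _ => False

/-- Polarity of a statement: proof (`pos`) or refutation (`neg`). -/
inductive Side : Type where
  | pos : Side
  | neg : Side
deriving DecidableEq

/-- A premise of an atomic rule: a set of discharged atomic proof hypotheses,
a set of discharged atomic refutation hypotheses, a polarity, and an atom. -/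
structure APrem : Type where
  hypP : Set Atom
  hypN : Set Atom
  side : Side
  conc : Atom

/-- An atomic rule: finitely many premises and an atomic conclusion, concluded
either as a proof (`side = pos`) or as a refutation (`side = neg`).
A rule with no premises is an axiom. -/
structure AtomicRule : Type where
  prems : List APrem
  side : Side
  conc : Atom

/-- A bilateral atomic system (base) is a set of atomic rules. -/
abbrev Base : Type := Set AtomicRule

/-- Atomic derivability over a base `B`, from atomic proof hypotheses `Γ` and atomic
refutation hypotheses `Δ`. -/
inductive AtDeriv (B : Base) : Set Atom → Set Atom → Side → Atom → Prop where
  | hypP {Γ Δ : Set Atom} {p : Atom} (h : p ∈ Γ) : AtDeriv B Γ Δ .pos p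
  | hypN {Γ Δ : Set Atom} {p : Atom} (h : p ∈ Δ) : AtDeriv B Γ Δ .neg p
  | app {Γ Δ : Set Atom} {r : AtomicRule} (hr : r ∈ B)
      (h : ∀ pr ∈ r.prems, AtDeriv B (Γ ∪ pr.hypP) (Δ ∪ pr.hypN) pr.side pr.conc) :
      AtDeriv B Γ Δ r.side r.conc

/-- `⊢⁺_B p` / `⊢⁻_B p`: closed atomic derivability in `B`. -/
def AtProves (B : Base) (s : Side) (p : Atom) : Prop := AtDeriv B ∅ ∅ s p

/-- `B` is logically consistent: not `⊢⁺_B ⊥` and not `⊢⁻_B ⊤`. -/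
def LogConsistent (B : Base) : Prop := ¬ AtProves B .pos .bot ∧ ¬ AtProves B .neg .top

/-- `B` is unit complete: it contains a proof axiom concluding `⊤` and a
refutation axiom concluding `⊥`. -/
def UnitComplete (B : Base) : Prop :=
  (⟨[], .pos, .top⟩ : AtomicRule) ∈ B ∧ (⟨[], .neg, .bot⟩ : AtomicRule) ∈ B

/-- `B` is epistemically consistent: for every atom `p`, it contains the rules
concluding a proof of `⊥`, resp. a refutation of `⊤`, from a proof of `p` and a
refutation of `p`. -/
def EpiConsistent (B : Base) : Prop := ∀ p : Atom,
  (⟨[⟨∅, ∅, .pos, p⟩, ⟨∅, ∅, .neg, p⟩], .pos, .bot⟩ : AtomicRule) ∈ B ∧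
  (⟨[⟨∅, ∅, .pos, p⟩, ⟨∅, ∅, .neg, p⟩], .neg, .top⟩ : AtomicRule) ∈ B

/-- `B` is epistemically adequate. -/
def Adequate (B : Base) : Prop := LogConsistent B ∧ UnitComplete B ∧ EpiConsistent B

/-- Bilateral support `⊩^±_B φ` (for epistemically adequate bases). -/
def Support (B : Base) (s : Side) (φ : Formula) : Prop :=
  match s, φ with
  | s, .atom a => AtDeriv B ∅ ∅ s a
  | .pos, .conj φ ψ => Support B .pos φ ∧ Support B .pos ψ
  | .neg, .conj φ ψ => ∀ C : Base, Adequate C → B ⊆ C → ∀ p : Atom,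
      ((∀ D : Base, Adequate D → C ⊆ D → Support D .neg φ → AtDeriv D ∅ ∅ .pos p) →
       (∀ D : Base, Adequate D → C ⊆ D → Support D .neg ψ → AtDeriv D ∅ ∅ .pos p) →
        AtDeriv C ∅ ∅ .pos p) ∧
      ((∀ D : Base, Adequate D → C ⊆ D → Support D .neg φ → AtDeriv D ∅ ∅ .neg p) →
       (∀ D : Base, Adequate D → C ⊆ D → Support D .neg ψ → AtDeriv D ∅ ∅ .neg p) →
        AtDeriv C ∅ ∅ .neg p)
  | .pos, .disj φ ψ => ∀ C : Base, Adequate C → B ⊆ C → ∀ p : Atom,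
      ((∀ D : Base, Adequate D → C ⊆ D → Support D .pos φ → AtDeriv D ∅ ∅ .pos p) →
       (∀ D : Base, Adequate D → C ⊆ D → Support D .pos ψ → AtDeriv D ∅ ∅ .pos p) →
        AtDeriv C ∅ ∅ .pos p) ∧
      ((∀ D : Base, Adequate D → C ⊆ D → Support D .pos φ → AtDeriv D ∅ ∅ .neg p) →
       (∀ D : Base, Adequate D → C ⊆ D → Support D .pos ψ → AtDeriv D ∅ ∅ .neg p) →
        AtDeriv C ∅ ∅ .neg p)
  | .neg, .disj φ ψ => Support B .neg φ ∧ Support B .neg ψ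
  | .pos, .impl φ ψ => ∀ C : Base, Adequate C → B ⊆ C → Support C .pos φ → Support C .pos ψ
  | .neg, .impl φ ψ => Support B .pos φ ∧ Support B .neg ψ
  | .pos, .coimpl φ ψ => Support B .pos φ ∧ Support B .neg ψ
  | .neg, .coimpl φ ψ => ∀ C : Base, Adequate C → B ⊆ C → Support C .neg ψ → Support C .neg φ
termination_by sizeOf φ

/-- `Γ;Δ ⊩^±_B φ`: support of `φ` from proof assumptions `Γ` and refutation
assumptions `Δ` relative to the (adequate) base `B`. For empty `Γ` and `Δ` this is
plain support; for nonempty `Γ ∪ Δ` it is given by the clauses (Inf +)/(Inf −). -/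
def SupportSeq (B : Base) (Γ Δ : Set Formula) (s : Side) (φ : Formula) : Prop :=
  (Γ = ∅ ∧ Δ = ∅ ∧ Support B s φ) ∨
  ((Γ ∪ Δ).Nonempty ∧
    ∀ C : Base, Adequate C → B ⊆ C →
      (∀ γ ∈ Γ, Support C .pos γ) → (∀ δ ∈ Δ, Support C .neg δ) → Support C s φ)

/-- `Γ;Δ ⊩^± φ`: support relative to every epistemically adequate base. -/
def Valid (Γ Δ : Set Formula) (s : Side) (φ : Formula) : Prop :=
  ∀ B : Base, Adequate B → SupportSeq B Γ Δ s φ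

/-- Weak falsity does not imply strong falsity: if `p` is an atom
distinct from `⊥` and `⊤`, and `B` is an epistemically adequate base containing the
proof rule concluding `⊥` from the single proof premise `p`, in which no refutation
rule has conclusion `p`, then `⊩⁺_B p→⊥` but not `⊩⁻_B p`. -/
theorem weak_falsity_not_strong (p : Atom) (hpb : p ≠ .bot) (hpt : p ≠ .top)
    (B : Base) (hB : Adequate B)
    (hrule : (⟨[⟨∅, ∅, .pos, p⟩], .pos, .bot⟩ : AtomicRule) ∈ B)
    (hnoref : ∀ r ∈ B, r.side = .neg → r.conc ≠ p) :
    Support B .pos (Formula.impl (.atom p) Formula.bot) ∧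
    ¬ Support B .neg (.atom p) := by
  constructor
  · simp only [Support]
    intro C hC hBC hp
    have := AtDeriv.app (B := C) (Γ := (∅ : Set Atom)) (Δ := (∅ : Set Atom)) (hBC hrule) ?_
    · exact this
    · intro pr hpr
      simp at hpr
      subst hpr
      simpa using hp
  · intro h
    simp only [Support] at h
    have key : ∀ s q (Γ Δ : Set Atom), AtDeriv B Γ Δ s q → Γ = ∅ → Δ = ∅ →
        s = Side.neg → q = p → False := by
      intro s q Γ Δ d
      cases d with
      | hypP hmem => intro hΓ _ _ _; subst hΓ; exact hmem
      | hypN hmem => intro _ hΔ _ _; subst hΔ; exact hmem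
      | app hr _ => intro _ _ hs hq; exact hnoref _ hr hs hq
    exact key _ _ _ _ h rfl rfl rfl rfl
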